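/- arXiv:0709.0712 — 6 statements merged into one kernel-verified Lean document; each statement's English description precedes it below -/
import Mathlib

section
/- If two transvections r₁ and r₂ in GL(V) commute and their fixed hyperplanes are defined by linearly independent linear forms x₁ and x₂ respectively, then r₁ fixes x₂ and r₂ fixes x₁ (i.e., each transvection fixes the defining linear form of the other's hyperplane). -/
/-!
Writing `rᵢ = 1 + eᵢ ⊗ xᵢ`, the two products `r₁ r₂` and `r₂ r₁` differ by
`v ↦ x₁(e₂) x₂(v) e₁ - x₂(e₁) x₁(v) e₂`, so commutation forces these two rank-one maps to agree.
Evaluating at `e₁ ∈ ker x₁` gives `x₁(e₂) x₂(e₁) = 0`, and once one of the two coefficients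
vanishes the other one does too, as `x₁, x₂ ≠ 0`. Then `x₂ ∘ r₁ = x₂ + x₂(e₁) x₁ = x₂`, and
symmetrically for `x₁ ∘ r₂`.
-/

section Transvection

variable {R M : Type*} [CommRing R] [AddCommGroup M] [Module R M]

theorem Module.Dual.apply_eq_add_of_sub_eq_smul {r : M → M} {x : Module.Dual R M} {e : M}
    (hr : ∀ v, r v - v = x v • e) (y : Module.Dual R M) (v : M) :
    y (r v) = y v + x v * y e := by
  have := congrArg y (hr v)
  rw [map_sub, map_smul, smul_eq_mul] at this
  linear_combination this

theorem smul_eq_smul_of_commute_of_sub_eq_smul {r₁ r₂ : M → M} {x₁ x₂ : Module.Dual R M}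
    {e₁ e₂ : M} (h₁ : ∀ v, r₁ v - v = x₁ v • e₁) (h₂ : ∀ v, r₂ v - v = x₂ v • e₂)
    (hcomm : Function.Commute r₁ r₂) (v : M) :
    (x₁ e₂ * x₂ v) • e₁ = (x₂ e₁ * x₁ v) • e₂ := by
  have h₁₂ := Module.Dual.apply_eq_add_of_sub_eq_smul h₂ x₁ v
  have h₂₁ := Module.Dual.apply_eq_add_of_sub_eq_smul h₁ x₂ v
  have step₁ := h₁ (r₂ v)
  have step₂ := h₂ (r₁ v)
  rw [h₁₂] at step₁
  rw [h₂₁] at step₂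
  linear_combination (norm := module) hcomm v - step₁ + step₂ + h₁ v - h₂ v

end Transvection

theorem eq_zero_of_forall_mul_smul_eq_zero {k V : Type*} [Field k] [AddCommGroup V]
    [Module k V] {x : Module.Dual k V} {e : V} {c : k} (hx : x ≠ 0) (he : e ≠ 0)
    (h : ∀ v, (c * x v) • e = 0) : c = 0 := by
  obtain ⟨v, hv⟩ : ∃ v, x v ≠ 0 := by
    by_contra! h
    exact hx (LinearMap.ext h)
  simpa [he, hv] using h v

theorem statement0_general {k V : Type*} [Field k] [AddCommGroup V] [Module k V]
    (r₁ r₂ : V ≃ₗ[k] V) (x₁ x₂ : Module.Dual k V) (e₁ e₂ : V)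
    (h₁ : ∀ v : V, r₁ v - v = x₁ v • e₁)
    (h₂ : ∀ v : V, r₂ v - v = x₂ v • e₂)
    (he₁ : e₁ ≠ 0) (he₂ : e₂ ≠ 0)
    (ht₁ : x₁ e₁ = 0)
    (hcomm : r₁ * r₂ = r₂ * r₁)
    (hindep : LinearIndependent k ![x₁, x₂]) :
    x₂.comp (r₁ : V →ₗ[k] V) = x₂ ∧ x₁.comp (r₂ : V →ₗ[k] V) = x₁ := by
  have hx₁ : x₁ ≠ 0 := by simpa using hindep.ne_zero 0
  have hx₂ : x₂ ≠ 0 := by simpa using hindep.ne_zero 1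
  have key := smul_eq_smul_of_commute_of_sub_eq_smul h₁ h₂ (LinearEquiv.congr_fun hcomm)
  have hprod : x₁ e₂ * x₂ e₁ = 0 := by
    simpa [ht₁, he₁] using key e₁
  obtain ⟨h₂₁, h₁₂⟩ : x₂ e₁ = 0 ∧ x₁ e₂ = 0 := by
    rcases mul_eq_zero.mp hprod with h₁₂ | h₂₁
    · refine ⟨eq_zero_of_forall_mul_smul_eq_zero hx₁ he₂ fun v => ?_, h₁₂⟩
      simpa [h₁₂] using (key v).symm
    · refine ⟨h₂₁, eq_zero_of_forall_mul_smul_eq_zero hx₂ he₁ fun v => ?_⟩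
      simpa [h₂₁] using key v
  constructor <;> ext v
  · simp [Module.Dual.apply_eq_add_of_sub_eq_smul h₁, h₂₁]
  · simp [Module.Dual.apply_eq_add_of_sub_eq_smul h₂, h₁₂]

/-- If two transvections `r₁`, `r₂` of a vector space `V` commute and their
fixed hyperplanes are defined by linearly independent linear forms `x₁`, `x₂`, then each
transvection fixes the defining linear form of the other's hyperplane, i.e.
`x₂ ∘ r₁ = x₂` and `x₁ ∘ r₂ = x₁` (equivalently `r₁` fixes `x₂` and `r₂` fixes `x₁`
for the contragradient action). Here the transvection data is: `rᵢ v − v = xᵢ(v) • eᵢ`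
with `eᵢ ≠ 0` (so the fixed space is exactly the hyperplane `ker xᵢ`) and `xᵢ(eᵢ) = 0`
(the transvection condition `eᵢ ∈ V^{rᵢ}`). -/
theorem statement0 {k V : Type*} [Field k] [AddCommGroup V] [Module k V]
    (r₁ r₂ : V ≃ₗ[k] V) (x₁ x₂ : Module.Dual k V) (e₁ e₂ : V)
    (h₁ : ∀ v : V, r₁ v - v = x₁ v • e₁)
    (h₂ : ∀ v : V, r₂ v - v = x₂ v • e₂)
    (he₁ : e₁ ≠ 0) (he₂ : e₂ ≠ 0)
    (ht₁ : x₁ e₁ = 0) (ht₂ : x₂ e₂ = 0)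
    (hcomm : r₁ * r₂ = r₂ * r₁)
    (hindep : LinearIndependent k ![x₁, x₂]) :
    x₂.comp (r₁ : V →ₗ[k] V) = x₂ ∧ x₁.comp (r₂ : V →ₗ[k] V) = x₁ :=
  statement0_general r₁ r₂ x₁ x₂ e₁ e₂ h₁ h₂ he₁ he₂ ht₁ hcomm hindep
end

section
/- If σ ∈ GL(V) is a homology (diagonalizable pseudo-reflection) with eigenvector v of eigenvalue c ≠ 1, and τ ∈ GL(V) is a transvection commuting with σ, then τ(v) = v. -/
section

variable {R M : Type*}

theorem LinearEquiv.apply_apply_eq_smul_of_commute [CommSemiring R] [AddCommMonoid M]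
    [Module R M] {σ τ : M ≃ₗ[R] M} (hστ : Commute σ τ) {c : R} {v : M} (hv : σ v = c • v) :
    σ (τ v) = c • τ v :=
  calc σ (τ v) = τ (σ v) := LinearEquiv.congr_fun hστ v
    _ = c • τ v := by rw [hv, map_smul]

theorem apply_eq_self_of_apply_eq_smul [CommRing R] [NoZeroDivisors R] [AddCommGroup M]
    [Module R M] {τ : M →ₗ[R] M} (x : Module.Dual R M) (e : M) (hte : x e = 0) {v : M}
    (hτv : τ v - v = x v • e) {a : R} (ha : τ v = a • v) :
    τ v = v := by
  have hline : (a - 1) • v = x v • e := by rw [sub_smul, one_smul, ← ha, hτv]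
  have hax : (a - 1) * x v = 0 := by
    simpa [hte] using congrArg x hline
  rcases mul_eq_zero.mp hax with ha1 | hxv
  · rw [ha, sub_eq_zero.mp ha1, one_smul]
  · rw [← sub_eq_zero, hτv, hxv, zero_smul]

end

theorem statement6_general {k V : Type*} [Field k] [AddCommGroup V] [Module k V]
    (σ τ : V ≃ₗ[k] V) (c : k) (v : V)
    (hv : σ v = c • v)
    (heig : ∀ w : V, σ w = c • w → ∃ a : k, w = a • v)
    (x : Module.Dual k V) (e : V)
    (hτ : ∀ w : V, τ w - w = x w • e)
    (hte : x e = 0)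
    (hcomm : σ * τ = τ * σ) :
    τ v = v := by
  obtain ⟨a, ha⟩ := heig (τ v) (LinearEquiv.apply_apply_eq_smul_of_commute hcomm hv)
  exact apply_eq_self_of_apply_eq_smul (τ := τ.toLinearMap) x e hte (hτ v) ha

/-- If `σ ∈ GL(V)` is a homology (diagonalizable pseudo-reflection) with
eigenvector `v` of eigenvalue `c ≠ 1` (the eigenspace of `c` being one-dimensional, here
expressed by saying every eigenvector of eigenvalue `c` is a multiple of `v`), and
`τ ∈ GL(V)` is a transvection (`τ w − w = x(w) • e` with `x e = 0`, `e ∈ V^τ`)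
commuting with `σ`, then `τ v = v`. -/
theorem statement6 {k V : Type*} [Field k] [AddCommGroup V] [Module k V]
    (σ τ : V ≃ₗ[k] V) (c : k) (v : V)
    (hv : σ v = c • v) (hc : c ≠ 1)
    (heig : ∀ w : V, σ w = c • w → ∃ a : k, w = a • v)
    (x : Module.Dual k V) (e : V)
    (hτ : ∀ w : V, τ w - w = x w • e)
    (hte : x e = 0)
    (hcomm : σ * τ = τ * σ) :
    τ v = v :=
  statement6_general σ τ c v hv heig x e hτ hte hcomm
end

section
/- Let G < GL(V) finite act on k[V] = Sym(V*). If there exists a degree-preserving surjective k[V]^G-module homomorphism π : k[V] → k[V]^G with π(1) = 1 (the direct summand property), and the Hilbert ideal h = k[V]·(k[V]^G_+) is generated by homogeneous invariants f₁,…,f_n with n = dim V, then k[V]^G = k[f₁,…,f_n]; in particular the invariant ring is a polynomial ring. -/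
open MvPolynomial

set_option synthInstance.maxHeartbeats 1000000
set_option maxHeartbeats 1000000

variable {k : Type*} [Field k] {ι : Type*} [Fintype ι] [DecidableEq ι]

noncomputable def galAct (M : Matrix.GeneralLinearGroup ι k) :
    MvPolynomial ι k →ₐ[k] MvPolynomial ι k :=
  aeval fun i => ∑ j, (((M⁻¹ : Matrix.GeneralLinearGroup ι k) : Matrix ι ι k) i j) • X j

def invariants (G : Subgroup (Matrix.GeneralLinearGroup ι k)) :
    Subalgebra k (MvPolynomial ι k) where
  carrier := {p | ∀ σ ∈ G, galAct σ p = p}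
  mul_mem' := fun ha hb σ hσ => by rw [map_mul, ha σ hσ, hb σ hσ]
  add_mem' := fun ha hb σ hσ => by rw [map_add, ha σ hσ, hb σ hσ]
  algebraMap_mem' := fun r σ hσ => by simp [galAct]

noncomputable def fixedSpace (M : Matrix.GeneralLinearGroup ι k) : Submodule k (ι → k) :=
  LinearMap.ker (Matrix.mulVecLin ((M : Matrix ι ι k) - 1))

noncomputable def moveSpace (M : Matrix.GeneralLinearGroup ι k) : Submodule k (ι → k) :=
  LinearMap.range (Matrix.mulVecLin ((M : Matrix ι ι k) - 1))

def IsPseudoReflection (M : Matrix.GeneralLinearGroup ι k) : Prop :=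
  Module.finrank k (moveSpace M) = 1

def IsTransvection (M : Matrix.GeneralLinearGroup ι k) : Prop :=
  IsPseudoReflection M ∧ moveSpace M ≤ fixedSpace M

noncomputable def linForm (y : Module.Dual k (ι → k)) : MvPolynomial ι k :=
  ∑ i, C (y (Pi.single i 1)) * X i

noncomputable def hilbertIdeal (G : Subgroup (Matrix.GeneralLinearGroup ι k)) :
    Ideal (MvPolynomial ι k) :=
  Ideal.span {p | p ∈ invariants G ∧ ∃ d, 0 < d ∧ p.IsHomogeneous d}

def DSP (G : Subgroup (Matrix.GeneralLinearGroup ι k)) : Prop :=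
  ∃ π : MvPolynomial ι k →ₗ[↥(invariants G)] ↥(invariants G),
    Function.Surjective π ∧
    ∀ (p : MvPolynomial ι k) (d : ℕ), p.IsHomogeneous d →
      ((π p : MvPolynomial ι k)).IsHomogeneous d

noncomputable def fixedSubmodule (G : Subgroup (Matrix.GeneralLinearGroup ι k)) :
    Submodule k (ι → k) := ⨅ σ ∈ G, fixedSpace σ


lemma galAct_isHomogeneous (σ : Matrix.GeneralLinearGroup ι k)
    {p : MvPolynomial ι k} {d : ℕ} (hp : p.IsHomogeneous d) :
    (galAct σ p).IsHomogeneous d := by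
  have := MvPolynomial.IsHomogeneous.aeval (S := k) hp
      (fun i => ∑ j, (((σ⁻¹ : Matrix.GeneralLinearGroup ι k) : Matrix ι ι k) i j) • X j)
      (n := 1) (fun i => by
        apply MvPolynomial.IsHomogeneous.sum
        intro j _
        rw [smul_eq_C_mul]
        exact isHomogeneous_C_mul_X _ _)
  simpa [galAct] using this

lemma galAct_homogeneousComponent (σ : Matrix.GeneralLinearGroup ι k)
    (d : ℕ) (p : MvPolynomial ι k) :
    homogeneousComponent d (galAct σ p) = galAct σ (homogeneousComponent d p) := by
  conv_lhs => rw [← sum_homogeneousComponent p]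
  rw [map_sum, map_sum]
  have h1 : ∀ i ∈ Finset.range (p.totalDegree + 1),
      homogeneousComponent d (galAct σ (homogeneousComponent i p)) =
      if d = i then galAct σ (homogeneousComponent i p) else 0 := by
    intro i _
    exact homogeneousComponent_of_mem
      ((mem_homogeneousSubmodule _ _).2
        (galAct_isHomogeneous σ (homogeneousComponent_isHomogeneous i p)))
  rw [Finset.sum_congr rfl h1, Finset.sum_ite_eq]
  by_cases h : d < p.totalDegree + 1
  · rw [if_pos (Finset.mem_range.2 h)]
  · rw [if_neg (fun hc => h (Finset.mem_range.1 hc)),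
      homogeneousComponent_eq_zero _ _ (by omega), map_zero]

lemma homogeneousComponent_mul_right {R σ : Type*} [CommSemiring R]
    (c q : MvPolynomial σ R) {m d : ℕ} (hq : q.IsHomogeneous m) :
    homogeneousComponent d (c * q) =
      (if m ≤ d then homogeneousComponent (d - m) c else 0) * q := by
  conv_lhs => rw [← sum_homogeneousComponent c, Finset.sum_mul, map_sum]
  have h1 : ∀ i ∈ Finset.range (c.totalDegree + 1),
      homogeneousComponent d (homogeneousComponent i c * q) =
      if d = i + m then homogeneousComponent i c * q else 0 := by
    intro i _
    exact homogeneousComponent_of_mem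
      ((mem_homogeneousSubmodule _ _).2
        ((homogeneousComponent_isHomogeneous i c).mul hq))
  rw [Finset.sum_congr rfl h1]
  by_cases h : m ≤ d
  · have h2 : ∀ i ∈ Finset.range (c.totalDegree + 1),
        (if d = i + m then homogeneousComponent i c * q else 0) =
        (if d - m = i then homogeneousComponent i c * q else 0) := by
      intro i _
      exact if_congr (by omega) rfl rfl
    rw [Finset.sum_congr rfl h2, Finset.sum_ite_eq, if_pos h]
    by_cases h3 : d - m < c.totalDegree + 1
    · rw [if_pos (Finset.mem_range.2 h3)]
    · rw [if_neg (fun hc => h3 (Finset.mem_range.1 hc)),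
        homogeneousComponent_eq_zero _ _ (by omega), zero_mul]
  · rw [if_neg h, zero_mul]
    exact Finset.sum_eq_zero fun i _ => if_neg (by omega)

lemma homogeneousComponent_mem_invariants {G : Subgroup (Matrix.GeneralLinearGroup ι k)}
    {p : MvPolynomial ι k} (hp : p ∈ invariants G) (d : ℕ) :
    homogeneousComponent d p ∈ invariants G := fun σ hσ => by
  rw [← galAct_homogeneousComponent, hp σ hσ]

/-- Let a finite group `G < GL(V)` act on `k[V]` (realized as the polynomial
ring `k[X i]`, where `σ` acts by substituting the linear forms given by the rows of `σ⁻¹`).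
If the direct summand property holds — there is a degree-preserving surjective
`k[V]^G`-module homomorphism `π : k[V] → k[V]^G` with `π 1 = 1` — and the Hilbert ideal
(the ideal of `k[V]` generated by all positive-degree homogeneous invariants) is generated by
homogeneous invariants `f₁, …, f_n` with `n = dim V`, then `k[V]^G = k[f₁, …, f_n]`, i.e. the
invariant ring is the `k`-algebra generated by `f₁, …, f_n` (so it is a polynomial ring). -/
theorem statement7 {k : Type*} [Field k] {n : ℕ}
    (G : Subgroup (Matrix.GeneralLinearGroup (Fin n) k)) [Finite ↥G]
    (π : MvPolynomial (Fin n) k →ₗ[↥(invariants G)] ↥(invariants G))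
    (hπ1 : (π 1 : MvPolynomial (Fin n) k) = 1)
    (hπsurj : Function.Surjective π)
    (hπgr : ∀ (p : MvPolynomial (Fin n) k) (d : ℕ), p.IsHomogeneous d →
      (π p : MvPolynomial (Fin n) k).IsHomogeneous d)
    (f : Fin n → MvPolynomial (Fin n) k)
    (hfinv : ∀ i, f i ∈ invariants G)
    (hfhom : ∀ i, ∃ d, 0 < d ∧ (f i).IsHomogeneous d)
    (hfgen : Ideal.span (Set.range f) = hilbertIdeal G) :
    Algebra.adjoin k (Set.range f) = invariants G := by
  refine le_antisymm (Algebra.adjoin_le fun x hx => by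
    obtain ⟨i, rfl⟩ := hx; exact hfinv i) ?_
  -- π fixes invariants
  have hπfix : ∀ q : MvPolynomial (Fin n) k, ∀ hq : q ∈ invariants G,
      (π q : MvPolynomial (Fin n) k) = q := by
    intro q hq
    have h1 : q = (⟨q, hq⟩ : invariants G) • (1 : MvPolynomial (Fin n) k) := by
      rw [Subalgebra.smul_def, smul_eq_mul, mul_one]
    conv_lhs => rw [h1]
    rw [map_smul, smul_eq_mul]
    push_cast
    rw [hπ1, mul_one]
  -- key: homogeneous invariants lie in the adjoin, by strong induction on degree
  have key : ∀ d : ℕ, ∀ p : MvPolynomial (Fin n) k, p ∈ invariants G →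
      p.IsHomogeneous d → p ∈ Algebra.adjoin k (Set.range f) := by
    intro d
    induction d using Nat.strong_induction_on with
    | _ d ih =>
      intro p hpinv hphom
      rcases Nat.eq_zero_or_pos d with hd | hd
      · subst hd
        have : homogeneousComponent 0 p = p :=
          by rw [homogeneousComponent_of_mem ((mem_homogeneousSubmodule _ _).2 hphom), if_pos rfl]
        rw [← this, homogeneousComponent_zero]
        exact Subalgebra.algebraMap_mem _ _
      · have hpH : p ∈ hilbertIdeal G :=
          Ideal.subset_span ⟨hpinv, d, hd, hphom⟩
        rw [← hfgen] at hpH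
        obtain ⟨c, hc⟩ := Ideal.mem_span_range_iff_exists_fun.1 hpH
        choose df hdf hfh using hfhom
        set g : Fin n → MvPolynomial (Fin n) k :=
          fun i => if df i ≤ d then homogeneousComponent (d - df i) (c i) else 0 with hg
        have hpg : p = ∑ i, g i * f i := by
          have h2 : homogeneousComponent d p = p := by
            rw [homogeneousComponent_of_mem ((mem_homogeneousSubmodule _ _).2 hphom), if_pos rfl]
          conv_lhs => rw [← h2, ← hc, map_sum]
          refine Finset.sum_congr rfl fun i _ => ?_
          rw [homogeneousComponent_mul_right _ _ (hfh i)]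
        have hpπ : p = ∑ i, f i * (π (g i) : MvPolynomial (Fin n) k) := by
          conv_lhs => rw [← hπfix p hpinv, hpg, map_sum]
          push_cast
          refine Finset.sum_congr rfl fun i _ => ?_
          have h3 : g i * f i = (⟨f i, hfinv i⟩ : invariants G) • g i := by
            rw [Subalgebra.smul_def, smul_eq_mul, mul_comm]
          rw [h3, map_smul, smul_eq_mul]
          push_cast
          ring
        rw [hpπ]
        refine Subalgebra.sum_mem _ fun i _ => mul_mem
          (Algebra.subset_adjoin ⟨i, rfl⟩) ?_
        have hgih : (g i).IsHomogeneous (d - df i) := by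
          rw [hg]
          dsimp only
          split
          · exact homogeneousComponent_isHomogeneous _ _
          · exact isHomogeneous_zero _ _ _
        exact ih (d - df i) (by have := hdf i; omega) _ (SetLike.coe_mem _)
          (hπgr (g i) _ hgih)
  intro p hpinv
  have : (∑ i ∈ Finset.range (p.totalDegree + 1), homogeneousComponent i p) = p :=
    sum_homogeneousComponent p
  rw [← this]
  exact Subalgebra.sum_mem _ fun i _ =>
    key i _ (homogeneousComponent_mem_invariants hpinv i) (homogeneousComponent_isHomogeneous i p)
end

section
/- Let G < GL(V) be a finite abelian group generated by transvections. Then the relative Hilbert ideal h_{V^G} equals the ideal of k[V] generated by (V^G)^⊥, and is generated by n − s G-invariant linear forms, where s = dim V^G; in particular it is a complete intersection ideal generated by linear invariants. -/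
open MvPolynomial

set_option synthInstance.maxHeartbeats 1000000
set_option maxHeartbeats 1000000

variable {k : Type*} [Field k] {ι : Type*} [Fintype ι] [DecidableEq ι]

/-! A transvection `σ` commuting with a pseudo-reflection `τ` preserves the line `(τ - 1)V`, hence
acts on it by a scalar `c`, and `(σ - 1)² = 0` forces `c = 1`. As `G` is abelian and generated by
transvections, `G` therefore fixes `(τ - 1)V` pointwise for every generating transvection `τ`.
Once `σ` fixes `(τ - 1)V` we have `(στ - 1)v = (σ - 1)v + (τ - 1)v`, so `(σ - 1)V ⊆ V^G` for all
`σ ∈ G`. Then every linear form vanishing on `V^G` is `G`-invariant, so the ideal generated by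
`(V^G)^⊥` is generated by invariants and equals its relative Hilbert ideal; a basis of `(V^G)^⊥`
gives `n - s` linear invariant generators. -/

open Matrix

section FixedAndMoved

variable {σ τ : GL ι k}

lemma mem_fixedSpace_iff {v : ι → k} : v ∈ fixedSpace σ ↔ (σ : Matrix ι ι k) *ᵥ v = v := by
  simp [fixedSpace, sub_eq_zero]

lemma mem_moveSpace_iff {w : ι → k} :
    w ∈ moveSpace σ ↔ ∃ v, (σ : Matrix ι ι k) *ᵥ v - v = w := by
  simp [moveSpace]

lemma sub_mem_moveSpace (v : ι → k) : (σ : Matrix ι ι k) *ᵥ v - v ∈ moveSpace σ :=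
  mem_moveSpace_iff.2 ⟨v, rfl⟩

lemma mem_fixedSubmodule_iff {G : Subgroup (GL ι k)} {v : ι → k} :
    v ∈ fixedSubmodule G ↔ ∀ σ ∈ G, (σ : Matrix ι ι k) *ᵥ v = v := by
  simp only [fixedSubmodule, Submodule.mem_iInf, mem_fixedSpace_iff]

lemma fixedSubmodule_le_fixedSpace {G : Subgroup (GL ι k)} (hσ : σ ∈ G) :
    fixedSubmodule G ≤ fixedSpace σ :=
  fun _ hv => mem_fixedSpace_iff.2 (mem_fixedSubmodule_iff.1 hv σ hσ)

lemma le_fixedSubmodule_closure {S : Set (GL ι k)} {W : Submodule k (ι → k)}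
    (hW : ∀ σ ∈ S, W ≤ fixedSpace σ) : W ≤ fixedSubmodule (Subgroup.closure S) := by
  intro v hv
  rw [mem_fixedSubmodule_iff]
  intro σ hσ
  induction hσ using Subgroup.closure_induction with
  | mem σ hσ => exact mem_fixedSpace_iff.1 (hW σ hσ hv)
  | one => simp
  | mul a b _ _ iha ihb => rw [Units.val_mul, ← mulVec_mulVec, ihb, iha]
  | inv a _ iha => rw [← iha, mulVec_mulVec, Units.inv_mul, one_mulVec, iha]

lemma moveSpace_one : moveSpace (1 : GL ι k) = ⊥ := by
  simp [moveSpace]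

lemma moveSpace_inv_le : moveSpace σ⁻¹ ≤ moveSpace σ := by
  rintro _ ⟨v, rfl⟩
  simp only [mulVecLin_apply, sub_mulVec, one_mulVec]
  refine mem_moveSpace_iff.2 ⟨-(((σ⁻¹ : GL ι k) : Matrix ι ι k) *ᵥ v), ?_⟩
  rw [mulVec_neg, mulVec_mulVec, Units.mul_inv, one_mulVec]
  abel

lemma moveSpace_mul_le (h : moveSpace τ ≤ fixedSpace σ) :
    moveSpace (σ * τ) ≤ moveSpace σ ⊔ moveSpace τ := by
  rintro _ ⟨v, rfl⟩
  have hfix := mem_fixedSpace_iff.1 (h (sub_mem_moveSpace v))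
  rw [mulVec_sub] at hfix
  have hsplit : ((σ * τ : GL ι k) : Matrix ι ι k) *ᵥ v - v =
      ((σ : Matrix ι ι k) *ᵥ v - v) + ((τ : Matrix ι ι k) *ᵥ v - v) := by
    rw [Units.val_mul, ← mulVec_mulVec]
    linear_combination (norm := module) hfix
  simp only [mulVecLin_apply, sub_mulVec, one_mulVec]
  rw [hsplit]
  exact Submodule.add_mem_sup (sub_mem_moveSpace v) (sub_mem_moveSpace v)

lemma mulVec_mem_moveSpace_of_commute (hcomm : Commute σ τ) {w : ι → k}
    (hw : w ∈ moveSpace τ) : (σ : Matrix ι ι k) *ᵥ w ∈ moveSpace τ := by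
  obtain ⟨v, rfl⟩ := mem_moveSpace_iff.1 hw
  refine mem_moveSpace_iff.2 ⟨(σ : Matrix ι ι k) *ᵥ v, ?_⟩
  rw [mulVec_sub, mulVec_mulVec, mulVec_mulVec, ← Units.val_mul, ← Units.val_mul, hcomm.eq]

lemma moveSpace_le_fixedSpace_of_commute (hσ : IsTransvection σ)
    (hτ : IsPseudoReflection τ) (hcomm : Commute σ τ) : moveSpace τ ≤ fixedSpace σ := by
  intro w hw
  rw [mem_fixedSpace_iff]
  by_cases hw0 : w = 0
  · simp [hw0]
  obtain ⟨c, hc⟩ := (finrank_eq_one_iff_of_nonzero' (⟨w, hw⟩ : moveSpace τ)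
    (by simpa using hw0)).1 hτ ⟨_, mulVec_mem_moveSpace_of_commute hcomm hw⟩
  replace hc : (σ : Matrix ι ι k) *ᵥ w = c • w := by simpa using hc.symm
  have hfix := mem_fixedSpace_iff.1 (hσ.2 (sub_mem_moveSpace (σ := σ) w))
  rw [mulVec_sub, hc, mulVec_smul, hc, smul_smul] at hfix
  have hsq : (c - 1) ^ 2 • w = 0 := by linear_combination (norm := module) hfix
  have hc1 : c = 1 := by simpa [sub_eq_zero, hw0] using hsq
  rw [hc, hc1, one_smul]

end FixedAndMoved

lemma moveSpace_le_fixedSubmodule {G : Subgroup (GL ι k)}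
    (habelian : ∀ a ∈ G, ∀ b ∈ G, a * b = b * a)
    (hgen : Subgroup.closure {τ | τ ∈ G ∧ IsTransvection τ} = G)
    {σ : GL ι k} (hσ : σ ∈ G) : moveSpace σ ≤ fixedSubmodule G := by
  rw [← hgen] at hσ
  induction hσ using Subgroup.closure_induction with
  | mem τ hτ =>
    rw [← hgen]
    exact le_fixedSubmodule_closure fun ρ hρ =>
      moveSpace_le_fixedSpace_of_commute hρ.2 hτ.2.1 (habelian ρ hρ.1 τ hτ.1)
  | one => simp [moveSpace_one]
  | mul a b ha _ iha ihb =>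
    have hfix := fixedSubmodule_le_fixedSpace (hgen ▸ ha)
    exact (moveSpace_mul_le (ihb.trans hfix)).trans (sup_le iha ihb)
  | inv a _ iha => exact moveSpace_inv_le.trans iha

lemma Module.Dual.apply_mulVec_single (y : Module.Dual k (ι → k)) (N : Matrix ι ι k) (j : ι) :
    y (N *ᵥ Pi.single j 1) = ∑ i, y (Pi.single i 1) * N i j := by
  rw [y.pi_apply_eq_sum_univ]
  refine Finset.sum_congr rfl fun i _ => ?_
  rw [smul_eq_mul, mul_comm]
  congr 1
  · congr 1
    ext l
    simp [Pi.single_apply, eq_comm]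
  · simp

lemma galAct_linForm (M : GL ι k) (y : Module.Dual k (ι → k)) :
    galAct M (linForm y) = linForm (y ∘ₗ mulVecLin ((M⁻¹ : GL ι k) : Matrix ι ι k)) := by
  simp only [galAct, linForm, map_sum, map_mul, aeval_C, aeval_X, algebraMap_eq, Finset.mul_sum,
    LinearMap.comp_apply, mulVecLin_apply, y.apply_mulVec_single, Finset.sum_mul]
  rw [Finset.sum_comm]
  simp only [smul_eq_C_mul, ← mul_assoc, ← C_mul]

lemma linForm_mem_invariants {G : Subgroup (GL ι k)}
    (habelian : ∀ a ∈ G, ∀ b ∈ G, a * b = b * a)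
    (hgen : Subgroup.closure {τ | τ ∈ G ∧ IsTransvection τ} = G)
    {y : Module.Dual k (ι → k)} (hy : y ∈ (fixedSubmodule G).dualAnnihilator) :
    linForm y ∈ invariants G := by
  intro σ hσ
  rw [galAct_linForm]
  congr 1
  refine LinearMap.ext fun v => ?_
  have hmove := moveSpace_le_fixedSubmodule habelian hgen (inv_mem hσ) (sub_mem_moveSpace v)
  simpa [sub_eq_zero] using (Submodule.mem_dualAnnihilator y).1 hy _ hmove

noncomputable def linFormₗ : Module.Dual k (ι → k) →ₗ[k] MvPolynomial ι k where
  toFun := linForm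
  map_add' y z := by simp [linForm, add_mul, Finset.sum_add_distrib]
  map_smul' c y := by simp [linForm, Finset.mul_sum, smul_eq_C_mul, mul_assoc]

lemma Ideal.span_image_span {R A M : Type*} [CommSemiring R] [CommSemiring A] [Algebra R A]
    [AddCommMonoid M] [Module R M] (f : M →ₗ[R] A) (s : Set M) :
    Ideal.span (f '' Submodule.span R s) = Ideal.span (f '' s) := by
  rw [← Submodule.map_coe, Submodule.map_span]
  exact Submodule.span_span_of_tower R A _

lemma Ideal.map_comap_span_of_subset_range {A B : Type*} [CommRing A] [CommRing B]
    [Algebra A B] {s : Set B} (hs : s ⊆ Set.range (algebraMap A B)) :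
    ((Ideal.span s).comap (algebraMap A B)).map (algebraMap A B) = Ideal.span s := by
  refine le_antisymm Ideal.map_comap_le (Ideal.span_le.2 fun x hx => ?_)
  obtain ⟨a, rfl⟩ := hs hx
  exact Ideal.mem_map_of_mem _ (Ideal.mem_comap.2 (Ideal.subset_span hx))

lemma Subspace.finrank_dualAnnihilator_pi {n : ℕ} (W : Subspace k (Fin n → k)) :
    Module.finrank k W.dualAnnihilator = n - Module.finrank k W := by
  have := W.finrank_add_finrank_dualAnnihilator_eq
  rw [Module.finrank_fin_fun] at this
  omega

lemma Module.Basis.span_range_coe {R M : Type*} [Ring R] [AddCommGroup M] [Module R M]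
    {W : Submodule R M} {ι' : Type*} (b : Module.Basis ι' R W) :
    Submodule.span R (Set.range fun i => (b i : M)) = W := by
  rw [Set.range_comp' Subtype.val b, ← W.coe_subtype, Submodule.span_image, b.span_eq,
    Submodule.map_top, Submodule.range_subtype]

theorem statement11_general {k : Type*} [Field k] {n : ℕ}
    (G : Subgroup (Matrix.GeneralLinearGroup (Fin n) k))
    (habelian : ∀ a ∈ G, ∀ b ∈ G, a * b = b * a)
    (hgen : Subgroup.closure {τ | τ ∈ G ∧ IsTransvection τ} = G) :
    Ideal.map (algebraMap ↥(invariants G) (MvPolynomial (Fin n) k))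
        (Ideal.comap (algebraMap ↥(invariants G) (MvPolynomial (Fin n) k))
          (Ideal.span (linForm ''
            ((fixedSubmodule G).dualAnnihilator : Set (Module.Dual k (Fin n → k)))))) =
      Ideal.span (linForm ''
        ((fixedSubmodule G).dualAnnihilator : Set (Module.Dual k (Fin n → k)))) ∧
    ∃ y : Fin (n - Module.finrank k ↥(fixedSubmodule G)) → Module.Dual k (Fin n → k),
      (∀ i, linForm (y i) ∈ invariants G) ∧
      Ideal.span (Set.range fun i => linForm (y i)) =
        Ideal.span (linForm ''
          ((fixedSubmodule G).dualAnnihilator : Set (Module.Dual k (Fin n → k)))) := by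
  set W := (fixedSubmodule G).dualAnnihilator
  have hinv : ∀ y ∈ W, linForm y ∈ invariants G := fun y hy =>
    linForm_mem_invariants habelian hgen hy
  refine ⟨Ideal.map_comap_span_of_subset_range ?_, ?_⟩
  · rintro _ ⟨y, hy, rfl⟩
    exact ⟨⟨_, hinv y hy⟩, rfl⟩
  have : Module.Free k W := .of_divisionRing k W
  let b := Module.finBasisOfFinrankEq k W (Subspace.finrank_dualAnnihilator_pi _)
  refine ⟨fun i => (b i : Module.Dual k _), fun i => hinv _ (b i).2, ?_⟩
  have hspan :=
    Ideal.span_image_span linFormₗ (Set.range fun i => (b i : Module.Dual k (Fin n → k)))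
  rw [b.span_range_coe, ← Set.range_comp] at hspan
  exact hspan.symm

/-- Let `G < GL(V)` be a finite abelian group generated by transvections,
`s = dim V^G`. Then the relative Hilbert ideal `h_{V^G}` (the extension to `k[V]` of the
contraction to `k[V]^G` of the ideal generated by `(V^G)^⊥`) equals the ideal of `k[V]`
generated by `(V^G)^⊥`, and it is generated by `n − s` `G`-invariant linear forms; in
particular it is a complete intersection ideal generated by linear invariants. -/
theorem statement11 {k : Type*} [Field k] {n : ℕ}
    (G : Subgroup (Matrix.GeneralLinearGroup (Fin n) k)) [Finite ↥G]
    (habelian : ∀ a ∈ G, ∀ b ∈ G, a * b = b * a)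
    (hgen : Subgroup.closure {τ | τ ∈ G ∧ IsTransvection τ} = G) :
    Ideal.map (algebraMap ↥(invariants G) (MvPolynomial (Fin n) k))
        (Ideal.comap (algebraMap ↥(invariants G) (MvPolynomial (Fin n) k))
          (Ideal.span (linForm ''
            ((fixedSubmodule G).dualAnnihilator : Set (Module.Dual k (Fin n → k)))))) =
      Ideal.span (linForm ''
        ((fixedSubmodule G).dualAnnihilator : Set (Module.Dual k (Fin n → k)))) ∧
    ∃ y : Fin (n - Module.finrank k ↥(fixedSubmodule G)) → Module.Dual k (Fin n → k),
      (∀ i, linForm (y i) ∈ invariants G) ∧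
      Ideal.span (Set.range fun i => linForm (y i)) =
        Ideal.span (linForm ''
          ((fixedSubmodule G).dualAnnihilator : Set (Module.Dual k (Fin n → k)))) :=
  statement11_general G habelian hgen
end

section
/- Let G = T × D be a finite abelian pseudo-reflection group with T the transvection subgroup acting with different θ_T and D the homology subgroup with different θ_D. Then θ_T ∈ k[V^D] (a polynomial in coordinates of V^D), θ_D ∈ k[V_D], and θ_G = θ_T·θ_D; in particular θ_T is D-invariant and θ_D is T-invariant. -/
open MvPolynomial

set_option synthInstance.maxHeartbeats 1000000
set_option maxHeartbeats 1000000

variable {k : Type*} [Field k] {ι : Type*} [Fintype ι] [DecidableEq ι]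

/-- The block-diagonal embedding `GL(V^D) × GL(V_D) → GL(V^D ⊕ V_D)`. -/
noncomputable def blockHom {k : Type*} [Field k] {α β : Type*} [Fintype α] [DecidableEq α]
    [Fintype β] [DecidableEq β] :
    Matrix.GeneralLinearGroup α k × Matrix.GeneralLinearGroup β k →*
      Matrix.GeneralLinearGroup (α ⊕ β) k where
  toFun p :=
    ⟨Matrix.fromBlocks (p.1 : Matrix α α k) 0 0 (p.2 : Matrix β β k),
     Matrix.fromBlocks ((p.1⁻¹ : Matrix.GeneralLinearGroup α k) : Matrix α α k) 0 0
       ((p.2⁻¹ : Matrix.GeneralLinearGroup β k) : Matrix β β k),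
     by
      rw [Matrix.fromBlocks_multiply]
      simp only [Matrix.mul_zero, Matrix.zero_mul, add_zero, zero_add]
      rw [← Units.val_mul, ← Units.val_mul, mul_inv_cancel, mul_inv_cancel]
      simp [← Matrix.fromBlocks_one],
     by
      rw [Matrix.fromBlocks_multiply]
      simp only [Matrix.mul_zero, Matrix.zero_mul, add_zero, zero_add]
      rw [← Units.val_mul, ← Units.val_mul, inv_mul_cancel, inv_mul_cancel]
      simp [← Matrix.fromBlocks_one]⟩
  map_one' := by
    ext : 1
    simp [← Matrix.fromBlocks_one]
  map_mul' p q := by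
    ext : 1
    show Matrix.fromBlocks _ _ _ _ = Matrix.fromBlocks _ _ _ _ * Matrix.fromBlocks _ _ _ _
    rw [Matrix.fromBlocks_multiply]
    simp

/-- A homology: a pseudo-reflection that is not a transvection (it is then diagonalizable). -/
def IsHomology {k : Type*} [Field k] {ι : Type*} [Fintype ι] [DecidableEq ι]
    (M : Matrix.GeneralLinearGroup ι k) : Prop :=
  IsPseudoReflection M ∧ ¬ moveSpace M ≤ fixedSpace M

open scoped Classical in
/-- The product, over the elements of `G` satisfying the predicate `P` (e.g. over the
pseudo-reflections of `G`), of the chosen linear forms `x σ` defining their fixed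
hyperplanes: the "different" of the action when `P` selects the pseudo-reflections. -/
noncomputable def theta {k : Type*} [Field k] {ι : Type*} [Fintype ι] [DecidableEq ι]
    (G : Subgroup (Matrix.GeneralLinearGroup ι k)) [Fintype ↥G]
    (x : ↥G → Module.Dual k (ι → k))
    (P : Matrix.GeneralLinearGroup ι k → Prop) : MvPolynomial ι k :=
  ∏ σ : ↥G, if P (σ : Matrix.GeneralLinearGroup ι k) then linForm (x σ) else 1

/-!
Write `σ ∈ G` as the block matrix `diag(t, d)`. For a pseudo-reflection, `N = σ - 1` has rank
one, so `N² = c • N`, with `c = 0` exactly for transvections. Commuting products of unipotent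
elements are unipotent, so every `t ∈ T` is unipotent. A homology has the order of its eigenvalue
`1 + c`, a root of unity, whose order is prime to the characteristic; commuting products preserve
this, so every `d ∈ D` has order invertible in `k`. Hence for a transvection `diag(t, d)` the block
`d` is unipotent of invertible order, so `d = 1`; for a homology `diag(t, d)` the block
`c⁻¹ • (t - 1)` is a nilpotent idempotent, so `t = 1`. So the fixed hyperplane of a transvection
contains `V_D` and that of a homology contains `V^D`: this puts `θ_T` in `k[V^D]` and `θ_D` in
`k[V_D]`, which are fixed by `diag(1, d)` and `diag(t, 1)` respectively. Finally `θ_G = θ_T θ_D`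
since every pseudo-reflection is exactly one of the two kinds.
-/

section PowersOfRankOne

variable {A : Type*} [Ring A] [Algebra k A]

theorem one_add_pow_of_mul_self_eq_smul {N : A} {c : k} (h : N * N = c • N) (n : ℕ) :
    (1 + N) ^ n = 1 + (∑ i ∈ Finset.range n, (1 + c) ^ i) • N := by
  induction n with
  | zero => simp
  | succ n ih =>
    rw [pow_succ, ih, geom_sum_succ]
    simp only [add_mul, mul_add, one_mul, mul_one, smul_mul_assoc, h, smul_smul]
    module

theorem one_add_pow_eq_one_iff_of_mul_self_eq_smul [NoZeroSMulDivisors k A] {N : A} {c : k}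
    (h : N * N = c • N) (hc : c ≠ 0) (hN : N ≠ 0) (n : ℕ) :
    (1 + N) ^ n = 1 ↔ (1 + c) ^ n = 1 := by
  have hgeom : (∑ i ∈ Finset.range n, (1 + c) ^ i) * c = (1 + c) ^ n - 1 := by
    simpa using geom_sum_mul (1 + c) n
  rw [one_add_pow_of_mul_self_eq_smul h, add_eq_left, smul_eq_zero, or_iff_left hN,
    ← sub_eq_zero (a := (1 + c) ^ n), ← hgeom, mul_eq_zero, or_iff_left hc]

theorem eq_one_of_pow_eq_one_of_mul_self_sub_one_eq_zero [NoZeroSMulDivisors k A] {u : A}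
    (h : (u - 1) * (u - 1) = 0) {n : ℕ} (hu : u ^ n = 1) (hn : (n : k) ≠ 0) : u = 1 := by
  have h' : (u - 1) * (u - 1) = (0 : k) • (u - 1) := by rw [h, zero_smul]
  rw [← add_sub_cancel 1 u, one_add_pow_of_mul_self_eq_smul h'] at hu
  simp only [add_zero, one_pow, Finset.sum_const, Finset.card_range, nsmul_eq_mul, mul_one,
    add_eq_left, smul_eq_zero] at hu
  exact sub_eq_zero.mp (hu.resolve_left hn)

theorem eq_zero_of_isNilpotent_of_mul_self_eq_smul {N : A} {c : k} (h : N * N = c • N)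
    (hc : c ≠ 0) (hN : IsNilpotent N) : N = 0 := by
  have hidem : IsIdempotentElem (c⁻¹ • N) := by
    rw [IsIdempotentElem, smul_mul_smul_comm, h, smul_smul, mul_assoc, inv_mul_cancel₀ hc, mul_one]
  simpa [hc] using hidem.eq_zero_of_isNilpotent (hN.smul c⁻¹)

end PowersOfRankOne

theorem LinearMap.exists_mul_self_eq_smul_of_finrank_range_eq_one {V : Type*} [AddCommGroup V]
    [Module k V] {f : Module.End k V} (h : Module.finrank k (LinearMap.range f) = 1) :
    ∃ c : k, f * f = c • f := by
  obtain ⟨v, -, hv⟩ := finrank_eq_one_iff'.mp h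
  have hspan : ∀ w, ∃ a : k, f w = a • (v : V) := fun w => by
    obtain ⟨a, ha⟩ := hv ⟨f w, LinearMap.mem_range_self f w⟩
    exact ⟨a, (congrArg Subtype.val ha).symm⟩
  obtain ⟨c, hc⟩ := hspan v
  refine ⟨c, LinearMap.ext fun w => ?_⟩
  obtain ⟨a, ha⟩ := hspan w
  simp [ha, hc, smul_comm a c]

section PseudoReflections

variable {M : GL ι k}

theorem moveSpace_le_fixedSpace_iff :
    moveSpace M ≤ fixedSpace M ↔ ((M : Matrix ι ι k) - 1) * ((M : Matrix ι ι k) - 1) = 0 := by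
  rw [moveSpace, fixedSpace, LinearMap.range_le_ker_iff,
    ← Matrix.toLinAlgEquiv'.injective.eq_iff, map_mul, map_zero]
  rfl

theorem IsPseudoReflection.exists_mul_self_eq_smul (hM : IsPseudoReflection M) :
    ∃ c : k,
      ((M : Matrix ι ι k) - 1) * ((M : Matrix ι ι k) - 1) = c • ((M : Matrix ι ι k) - 1) := by
  obtain ⟨c, hc⟩ := LinearMap.exists_mul_self_eq_smul_of_finrank_range_eq_one hM
  exact ⟨c, Matrix.toLinAlgEquiv'.injective (by rw [map_mul, map_smul]; exact hc)⟩

theorem IsPseudoReflection.sub_one_ne_zero (hM : IsPseudoReflection M) :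
    (M : Matrix ι ι k) - 1 ≠ 0 := by
  intro h
  rw [IsPseudoReflection, moveSpace, h, Matrix.mulVecLin_zero, LinearMap.range_zero,
    finrank_bot] at hM
  exact zero_ne_one hM

theorem IsTransvection.mul_self_sub_one_eq_zero (hM : IsTransvection M) :
    ((M : Matrix ι ι k) - 1) * ((M : Matrix ι ι k) - 1) = 0 :=
  moveSpace_le_fixedSpace_iff.mp hM.2

theorem IsHomology.exists_mul_self_eq_smul (hM : IsHomology M) :
    ∃ c ≠ (0 : k), ((M : Matrix ι ι k) - 1) * ((M : Matrix ι ι k) - 1) =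
      c • ((M : Matrix ι ι k) - 1) := by
  obtain ⟨c, hc⟩ := hM.1.exists_mul_self_eq_smul
  refine ⟨c, fun hc0 => hM.2 (moveSpace_le_fixedSpace_iff.mpr ?_), hc⟩
  rw [hc, hc0, zero_smul]

theorem IsHomology.natCast_orderOf_ne_zero (hM : IsHomology M) (hfin : IsOfFinOrder M) :
    (orderOf M : k) ≠ 0 := by
  obtain ⟨c, hc, hsq⟩ := hM.exists_mul_self_eq_smul
  have horder : orderOf M = orderOf (1 + c) := by
    rw [← orderOf_units, orderOf_eq_orderOf_iff]
    intro n
    rw [← one_add_pow_eq_one_iff_of_mul_self_eq_smul hsq hc hM.1.sub_one_ne_zero, add_sub_cancel]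
  have : NeZero (orderOf (1 + c)) := ⟨horder ▸ hfin.orderOf_pos.ne'⟩
  rw [horder]
  exact (IsPrimitiveRoot.orderOf (1 + c)).neZero'.out

end PseudoReflections

theorem natCast_orderOf_ne_zero_of_closure_eq {H : Type*} [Group H] {K : Subgroup H} {S : Set H}
    (hS : Subgroup.closure S = K)
    (hK : ∀ a ∈ K, ∀ b ∈ K, a * b = b * a) (hord : ∀ s ∈ S, (orderOf s : k) ≠ 0) :
    ∀ g ∈ K, (orderOf g : k) ≠ 0 := by
  subst hS
  intro g hg
  induction hg using Subgroup.closure_induction with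
  | mem s hs => exact hord s hs
  | one => simp
  | mul a b ha hb iha ihb =>
    intro hab
    have hdvd := Nat.cast_dvd_cast (α := k) (Commute.orderOf_mul_dvd_mul_orderOf (hK a ha b hb))
    rw [hab, zero_dvd_iff, Nat.cast_mul] at hdvd
    exact mul_ne_zero iha ihb hdvd
  | inv a ha iha => rwa [orderOf_inv]

theorem isNilpotent_sub_one_of_closure_eq {R : Type*} [Ring R] {K : Subgroup Rˣ} {S : Set Rˣ}
    (hS : Subgroup.closure S = K) (hK : ∀ a ∈ K, ∀ b ∈ K, a * b = b * a)
    (hnil : ∀ s ∈ S, IsNilpotent ((s : R) - 1)) :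
    ∀ u ∈ K, IsNilpotent ((u : R) - 1) := by
  subst hS
  intro u hu
  induction hu using Subgroup.closure_induction with
  | mem s hs => exact hnil s hs
  | one => simp
  | mul a b ha hb iha ihb =>
    have hab : Commute (a : R) b := congrArg Units.val (hK a ha b hb)
    have hb' : Commute (a : R) ((b : R) - 1) := hab.sub_right (Commute.one_right _)
    have hcomm : Commute ((a : R) * (b - 1)) ((a : R) - 1) :=
      ((Commute.refl _).sub_right (Commute.one_right _)).mul_left
        (hab.symm.sub_left (Commute.one_left _) |>.sub_right (Commute.one_right _))
    rw [Units.val_mul, show (a : R) * b - 1 = a * (b - 1) + (a - 1) by noncomm_ring]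
    exact hcomm.isNilpotent_add (hb'.isNilpotent_mul_left ihb) iha
  | inv a ha iha =>
    have h : Commute ((a⁻¹ : Rˣ) : R) ((a : R) - 1) :=
      (Commute.refl (a : R)).units_inv_left.sub_right (Commute.one_right _)
    rw [show ((a⁻¹ : Rˣ) : R) - 1 = -(↑a⁻¹ * (↑a - 1)) by
      rw [mul_sub, Units.inv_mul, mul_one, neg_sub]]
    exact (h.isNilpotent_mul_left iha).neg

theorem MvPolynomial.algHom_eq_self_of_mem_supported {σ R : Type*} [CommSemiring R]
    {φ : MvPolynomial σ R →ₐ[R] MvPolynomial σ R} {s : Set σ} (hφ : ∀ i ∈ s, φ (X i) = X i)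
    {p : MvPolynomial σ R} (hp : p ∈ supported R s) : φ p = p := by
  rw [supported_eq_adjoin_X] at hp
  exact Algebra.adjoin_le (S := AlgHom.equalizer φ (AlgHom.id R _))
    (by rintro _ ⟨i, hi, rfl⟩; exact hφ i hi) hp

section Blocks

variable {α β : Type*} [Fintype α] [DecidableEq α] [Fintype β] [DecidableEq β]

theorem coe_blockHom (t : GL α k) (d : GL β k) :
    (blockHom (t, d) : Matrix (α ⊕ β) (α ⊕ β) k) =
      Matrix.fromBlocks (t : Matrix α α k) 0 0 (d : Matrix β β k) := rfl

theorem coe_blockHom_sub_one (t : GL α k) (d : GL β k) :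
    (blockHom (t, d) : Matrix (α ⊕ β) (α ⊕ β) k) - 1 =
      Matrix.fromBlocks ((t : Matrix α α k) - 1) 0 0 ((d : Matrix β β k) - 1) := by
  ext (i | i) (j | j) <;> simp [coe_blockHom, Matrix.one_apply]

theorem coe_blockHom_sub_one_mul_self_eq_smul_iff {t : GL α k} {d : GL β k} {c : k} :
    ((blockHom (t, d) : Matrix (α ⊕ β) (α ⊕ β) k) - 1) * ((blockHom (t, d) : Matrix _ _ k) - 1) =
        c • ((blockHom (t, d) : Matrix _ _ k) - 1) ↔
      ((t : Matrix α α k) - 1) * ((t : Matrix α α k) - 1) = c • ((t : Matrix α α k) - 1) ∧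
        ((d : Matrix β β k) - 1) * ((d : Matrix β β k) - 1) = c • ((d : Matrix β β k) - 1) := by
  rw [coe_blockHom_sub_one, Matrix.fromBlocks_multiply, Matrix.fromBlocks_smul,
    Matrix.fromBlocks_inj]
  simp

theorem single_inr_mem_fixedSpace_blockHom (t : GL α k) (j : β) :
    Pi.single (Sum.inr j) 1 ∈ fixedSpace (blockHom (t, (1 : GL β k))) := by
  rw [fixedSpace, LinearMap.mem_ker, Matrix.mulVecLin_apply, coe_blockHom_sub_one]
  ext (i | i) <;> simp [Matrix.mulVec_single]

theorem single_inl_mem_fixedSpace_blockHom (d : GL β k) (i : α) :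
    Pi.single (Sum.inl i) 1 ∈ fixedSpace (blockHom ((1 : GL α k), d)) := by
  rw [fixedSpace, LinearMap.mem_ker, Matrix.mulVecLin_apply, coe_blockHom_sub_one]
  ext (j | j) <;> simp [Matrix.mulVec_single]

theorem single_inr_mem_fixedSpace_of_isTransvection {t : GL α k} {d : GL β k}
    (h : IsTransvection (blockHom (t, d))) (hd : (orderOf d : k) ≠ 0) (j : β) :
    Pi.single (Sum.inr j) 1 ∈ fixedSpace (blockHom (t, d)) := by
  have hsq := h.mul_self_sub_one_eq_zero
  rw [← zero_smul k ((blockHom (t, d) : Matrix _ _ k) - 1),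
    coe_blockHom_sub_one_mul_self_eq_smul_iff, zero_smul, zero_smul] at hsq
  have hpow : (d : Matrix β β k) ^ orderOf d = 1 := by
    rw [← Units.val_pow_eq_pow_val, pow_orderOf_eq_one, Units.val_one]
  obtain rfl : d = 1 :=
    Units.ext (eq_one_of_pow_eq_one_of_mul_self_sub_one_eq_zero hsq.2 hpow hd)
  exact single_inr_mem_fixedSpace_blockHom t j

theorem single_inl_mem_fixedSpace_of_isHomology {t : GL α k} {d : GL β k}
    (h : IsHomology (blockHom (t, d))) (ht : IsNilpotent ((t : Matrix α α k) - 1)) (i : α) :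
    Pi.single (Sum.inl i) 1 ∈ fixedSpace (blockHom (t, d)) := by
  obtain ⟨c, hc, hsq⟩ := h.exists_mul_self_eq_smul
  rw [coe_blockHom_sub_one_mul_self_eq_smul_iff] at hsq
  obtain rfl : t = 1 :=
    Units.ext (sub_eq_zero.mp (eq_zero_of_isNilpotent_of_mul_self_eq_smul hsq.1 hc ht))
  exact single_inl_mem_fixedSpace_blockHom d i

theorem galAct_blockHom_one_left_eq_self (d : GL β k) {p : MvPolynomial (α ⊕ β) k}
    (hp : p ∈ supported k (Set.range Sum.inl)) : galAct (blockHom ((1 : GL α k), d)) p = p := by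
  refine MvPolynomial.algHom_eq_self_of_mem_supported ?_ hp
  rintro _ ⟨i, rfl⟩
  rw [galAct, aeval_X, ← map_inv, Prod.inv_mk, inv_one, coe_blockHom, Fintype.sum_sum_type]
  simp [Matrix.one_apply, ite_smul]

theorem galAct_blockHom_one_right_eq_self (t : GL α k) {p : MvPolynomial (α ⊕ β) k}
    (hp : p ∈ supported k (Set.range Sum.inr)) : galAct (blockHom (t, (1 : GL β k))) p = p := by
  refine MvPolynomial.algHom_eq_self_of_mem_supported ?_ hp
  rintro _ ⟨j, rfl⟩
  rw [galAct, aeval_X, ← map_inv, Prod.inv_mk, inv_one, coe_blockHom, Fintype.sum_sum_type]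
  simp [Matrix.one_apply, ite_smul]

end Blocks

theorem linForm_mem_supported {y : Module.Dual k (ι → k)} {s : Set ι}
    (hy : ∀ i ∉ s, y (Pi.single i 1) = 0) : linForm y ∈ supported k s := by
  refine Subalgebra.sum_mem _ fun i _ => ?_
  by_cases hi : i ∈ s
  · exact mul_mem (Subalgebra.algebraMap_mem _ _) (X_mem_supported.mpr hi)
  · simp [hy i hi]

section Theta

variable (G : Subgroup (GL ι k)) [Fintype G] (x : G → Module.Dual k (ι → k))

theorem theta_mem_supported {P : GL ι k → Prop} {s : Set ι}
    (h : ∀ σ : G, P σ → ∀ i ∉ s, x σ (Pi.single i 1) = 0) : theta G x P ∈ supported k s := by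
  refine Subalgebra.prod_mem _ fun σ _ => ?_
  split_ifs with hσ
  · exact linForm_mem_supported (h σ hσ)
  · exact one_mem _

theorem theta_isPseudoReflection :
    theta G x IsPseudoReflection = theta G x IsTransvection * theta G x IsHomology := by
  rw [theta, theta, theta, ← Finset.prod_mul_distrib]
  refine Finset.prod_congr rfl fun σ _ => ?_
  unfold IsTransvection IsHomology
  split_ifs <;> simp_all

end Theta

theorem statement14_general {k : Type*} [Field k] {m r : ℕ}
    (T : Subgroup (Matrix.GeneralLinearGroup (Fin m) k))
    (D : Subgroup (Matrix.GeneralLinearGroup (Fin r) k)) [Finite ↥D]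
    (hTab : ∀ a ∈ T, ∀ b ∈ T, a * b = b * a)
    (hDab : ∀ a ∈ D, ∀ b ∈ D, a * b = b * a)
    (hTgen : Subgroup.closure {τ | τ ∈ T ∧ IsTransvection τ} = T)
    (hDgen : Subgroup.closure {σ | σ ∈ D ∧ IsHomology σ} = D)
    (G : Subgroup (Matrix.GeneralLinearGroup (Fin m ⊕ Fin r) k)) [Fintype ↥G]
    (hG : G = (T.prod D).map blockHom)
    (x : ↥G → Module.Dual k (Fin m ⊕ Fin r → k))
    (hx : ∀ σ : ↥G, IsPseudoReflection (σ : Matrix.GeneralLinearGroup (Fin m ⊕ Fin r) k) →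
      LinearMap.ker (x σ) = fixedSpace (σ : Matrix.GeneralLinearGroup (Fin m ⊕ Fin r) k)) :
    theta G x IsTransvection ∈
      MvPolynomial.supported k (Set.range (Sum.inl : Fin m → Fin m ⊕ Fin r)) ∧
    theta G x IsHomology ∈
      MvPolynomial.supported k (Set.range (Sum.inr : Fin r → Fin m ⊕ Fin r)) ∧
    theta G x IsPseudoReflection = theta G x IsTransvection * theta G x IsHomology ∧
    (∀ d ∈ D, galAct (blockHom (1, d)) (theta G x IsTransvection) =
      theta G x IsTransvection) ∧
    (∀ t ∈ T, galAct (blockHom (t, 1)) (theta G x IsHomology) =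
      theta G x IsHomology) := by
  have hmem : ∀ σ : G, (σ : GL (Fin m ⊕ Fin r) k) ∈ (T.prod D).map blockHom := fun σ => hG ▸ σ.2
  have hvanish : ∀ σ : G, IsPseudoReflection (σ : GL (Fin m ⊕ Fin r) k) →
      ∀ v ∈ fixedSpace (σ : GL (Fin m ⊕ Fin r) k), x σ v = 0 := fun σ hσ v hv => by
    rwa [← LinearMap.mem_ker, hx σ hσ]
  have hTunip := isNilpotent_sub_one_of_closure_eq hTgen hTab fun τ hτ =>
    ⟨2, by rw [pow_two]; exact hτ.2.mul_self_sub_one_eq_zero⟩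
  have hDord := natCast_orderOf_ne_zero_of_closure_eq (k := k) hDgen hDab fun σ hσ =>
    hσ.2.natCast_orderOf_ne_zero <|
      D.subtype.isOfFinOrder (isOfFinOrder_of_finite (⟨σ, hσ.1⟩ : D))
  have hθT : theta G x IsTransvection ∈ supported k (Set.range Sum.inl) := by
    refine theta_mem_supported G x fun σ hσ => ?_
    obtain ⟨⟨t, d⟩, ⟨-, hd⟩, hσt⟩ := Subgroup.mem_map.mp (hmem σ)
    rintro (i | j) hj
    · exact absurd (Set.mem_range_self i) hj
    · refine hvanish σ hσ.1 _ ?_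
      rw [← hσt] at hσ ⊢
      exact single_inr_mem_fixedSpace_of_isTransvection hσ (hDord d hd) j
  have hθD : theta G x IsHomology ∈ supported k (Set.range Sum.inr) := by
    refine theta_mem_supported G x fun σ hσ => ?_
    obtain ⟨⟨t, d⟩, ⟨ht, -⟩, hσt⟩ := Subgroup.mem_map.mp (hmem σ)
    rintro (i | j) hi
    · refine hvanish σ hσ.1 _ ?_
      rw [← hσt] at hσ ⊢
      exact single_inl_mem_fixedSpace_of_isHomology hσ (hTunip t ht) i
    · exact absurd (Set.mem_range_self j) hi
  exact ⟨hθT, hθD, theta_isPseudoReflection G x, fun d _ => galAct_blockHom_one_left_eq_self d hθT,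
    fun t _ => galAct_blockHom_one_right_eq_self t hθD⟩

/-- Let `G = T × D` be a finite abelian pseudo-reflection group with `T`
the transvection subgroup and `D` the homology subgroup, block-diagonally in coordinates
adapted to `V = V^D ⊕ V_D`. For each pseudo-reflection `σ ∈ G` choose a linear form `x σ`
defining its fixed hyperplane, and let `θ_T`, `θ_D`, `θ_G` be the products of these forms
over the transvections, the homologies and all the pseudo-reflections of `G` respectively
(the differents of `T`, `D` and `G`). Then `θ_T ∈ k[V^D]` (it only involves the coordinates
`y` of `V^D`), `θ_D ∈ k[V_D]`, and `θ_G = θ_T · θ_D`; in particular `θ_T` is `D`-invariant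
and `θ_D` is `T`-invariant. -/
theorem statement14 {k : Type*} [Field k] {m r : ℕ}
    (T : Subgroup (Matrix.GeneralLinearGroup (Fin m) k)) [Finite ↥T]
    (D : Subgroup (Matrix.GeneralLinearGroup (Fin r) k)) [Finite ↥D]
    (hTab : ∀ a ∈ T, ∀ b ∈ T, a * b = b * a)
    (hDab : ∀ a ∈ D, ∀ b ∈ D, a * b = b * a)
    (hTgen : Subgroup.closure {τ | τ ∈ T ∧ IsTransvection τ} = T)
    (hDgen : Subgroup.closure {σ | σ ∈ D ∧ IsHomology σ} = D)
    (G : Subgroup (Matrix.GeneralLinearGroup (Fin m ⊕ Fin r) k)) [Fintype ↥G]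
    (hG : G = (T.prod D).map blockHom)
    (x : ↥G → Module.Dual k (Fin m ⊕ Fin r → k))
    (hx : ∀ σ : ↥G, IsPseudoReflection (σ : Matrix.GeneralLinearGroup (Fin m ⊕ Fin r) k) →
      LinearMap.ker (x σ) = fixedSpace (σ : Matrix.GeneralLinearGroup (Fin m ⊕ Fin r) k)) :
    theta G x IsTransvection ∈
      MvPolynomial.supported k (Set.range (Sum.inl : Fin m → Fin m ⊕ Fin r)) ∧
    theta G x IsHomology ∈
      MvPolynomial.supported k (Set.range (Sum.inr : Fin r → Fin m ⊕ Fin r)) ∧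
    theta G x IsPseudoReflection = theta G x IsTransvection * theta G x IsHomology ∧
    (∀ d ∈ D, galAct (blockHom (1, d)) (theta G x IsTransvection) =
      theta G x IsTransvection) ∧
    (∀ t ∈ T, galAct (blockHom (t, 1)) (theta G x IsHomology) =
      theta G x IsHomology) :=
  statement14_general T D hTab hDab hTgen hDgen G hG x hx
end

section
/- Explicit example: Let k = F₂, V = F₂⁴, and G ≅ (Z/2Z)³ the abelian transvection group generated by the three 4×4 matrices σ₁ = I + E₃₁, σ₂ = I + E₄₂, σ₃ = I + E₃₁ + E₃₂ + E₄₁ + E₄₂ (with E_{ij} elementary matrices). Then σ₁, σ₂, σ₃ are the only transvections in G, with transvection hyperplanes defined by x₁, x₂ and x₁ + x₂ respectively, and the Dedekind different is θ = x₁x₂(x₁+x₂). -/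
open MvPolynomial

set_option synthInstance.maxHeartbeats 1000000
set_option maxHeartbeats 1000000

variable {k : Type*} [Field k] {ι : Type*} [Fintype ι] [DecidableEq ι]

/-- `σ₁ = I + E₃₁` over `F₂`. -/
def M1 : Matrix (Fin 4) (Fin 4) (ZMod 2) := !![1,0,0,0; 0,1,0,0; 1,0,1,0; 0,0,0,1]
/-- `σ₂ = I + E₄₂` over `F₂`. -/
def M2 : Matrix (Fin 4) (Fin 4) (ZMod 2) := !![1,0,0,0; 0,1,0,0; 0,0,1,0; 0,1,0,1]
/-- `σ₃ = I + E₃₁ + E₃₂ + E₄₁ + E₄₂` over `F₂`. -/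
def M3 : Matrix (Fin 4) (Fin 4) (ZMod 2) := !![1,0,0,0; 0,1,0,0; 1,1,1,0; 1,1,0,1]

def s1 : Matrix.GeneralLinearGroup (Fin 4) (ZMod 2) := ⟨M1, M1, by decide, by decide⟩
def s2 : Matrix.GeneralLinearGroup (Fin 4) (ZMod 2) := ⟨M2, M2, by decide, by decide⟩
def s3 : Matrix.GeneralLinearGroup (Fin 4) (ZMod 2) := ⟨M3, M3, by decide, by decide⟩

/-! The generators are commuting involutions, so `G` consists of the eight products
`σ₁^a σ₂^b σ₃^c`. Each is `I + N` with `N = [[0, 0], [A, 0]]` in 2×2 blocks and `A` in the span of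
`E₁₁`, `E₂₂` and the all-ones matrix; hence `(g - 1)² = 0`, `g - 1` has the rank of `A`, and the
only rank-one `A` in that span come from the three generators. Over `F₂` a linear form is
determined by its kernel, so the forms cutting out the three fixed hyperplanes are `x₁`, `x₂`,
`x₁ + x₂`, and `θ` is their product. -/

theorem linForm_add (y z : Module.Dual k (ι → k)) : linForm (y + z) = linForm y + linForm z := by
  simp only [linForm, LinearMap.add_apply, map_add, add_mul, Finset.sum_add_distrib]

theorem linForm_proj (i : ι) : linForm (LinearMap.proj i : (ι → k) →ₗ[k] k) = X i := by
  simp [linForm, Pi.single_apply]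

theorem Module.Dual.eq_of_ker_eq_of_zmod_two {V : Type*} [AddCommGroup V] [Module (ZMod 2) V]
    {f g : Module.Dual (ZMod 2) V} (h : LinearMap.ker f = LinearMap.ker g) : f = g := by
  ext v
  have hv : f v = 0 ↔ g v = 0 := by rw [← LinearMap.mem_ker, ← LinearMap.mem_ker, h]
  generalize f v = a at hv
  generalize g v = b at hv
  revert a b
  decide

section FiniteField

variable [Fintype k] [DecidableEq k]

instance (M : Matrix.GeneralLinearGroup ι k) : DecidablePred (· ∈ moveSpace M) := fun x =>
  decidable_of_iff (∃ y, Matrix.mulVecLin ((M : Matrix ι ι k) - 1) y = x) LinearMap.mem_range.symm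

instance (M : Matrix.GeneralLinearGroup ι k) : DecidablePred (· ∈ fixedSpace M) := fun x =>
  decidable_of_iff (Matrix.mulVecLin ((M : Matrix ι ι k) - 1) x = 0) LinearMap.mem_ker.symm

theorem isTransvection_iff_card_moveSpace (M : Matrix.GeneralLinearGroup ι k) :
    IsTransvection M ↔
      Fintype.card (moveSpace M) = Fintype.card k ∧ ∀ v ∈ moveSpace M, v ∈ fixedSpace M := by
  rw [IsTransvection, IsPseudoReflection, Module.card_eq_pow_finrank (K := k), SetLike.le_def]
  refine and_congr_left fun _ => ⟨fun h => by rw [h, pow_one], fun h => ?_⟩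
  exact Nat.pow_right_injective Fintype.one_lt_card (h.trans (pow_one _).symm)

end FiniteField

def sigmaSubgroup : Subgroup (Matrix.GeneralLinearGroup (Fin 4) (ZMod 2)) where
  carrier := {1, s1, s2, s3, s1 * s2, s1 * s3, s2 * s3, s1 * s2 * s3}
  one_mem' := Or.inl rfl
  mul_mem' := by
    rintro a b (rfl|rfl|rfl|rfl|rfl|rfl|rfl|rfl) (rfl|rfl|rfl|rfl|rfl|rfl|rfl|rfl) <;> decide
  inv_mem' := by
    rintro a (rfl|rfl|rfl|rfl|rfl|rfl|rfl|rfl) <;> decide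

theorem closure_le_sigmaSubgroup : Subgroup.closure {s1, s2, s3} ≤ sigmaSubgroup := by
  rw [Subgroup.closure_le]
  rintro a (rfl|rfl|rfl)
  exacts [Or.inr (Or.inl rfl), Or.inr (Or.inr (Or.inl rfl)), Or.inr (Or.inr (Or.inr (Or.inl rfl)))]

theorem isTransvection_iff_of_mem_sigmaSubgroup {g : Matrix.GeneralLinearGroup (Fin 4) (ZMod 2)}
    (hg : g ∈ sigmaSubgroup) : IsTransvection g ↔ g = s1 ∨ g = s2 ∨ g = s3 := by
  rw [isTransvection_iff_card_moveSpace]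
  rcases hg with rfl|rfl|rfl|rfl|rfl|rfl|rfl|rfl <;> decide

theorem fixedSpace_s1 :
    fixedSpace s1 = LinearMap.ker (LinearMap.proj 0 : (Fin 4 → ZMod 2) →ₗ[ZMod 2] ZMod 2) := by
  ext v
  rw [LinearMap.mem_ker]
  revert v
  decide

theorem fixedSpace_s2 :
    fixedSpace s2 = LinearMap.ker (LinearMap.proj 1 : (Fin 4 → ZMod 2) →ₗ[ZMod 2] ZMod 2) := by
  ext v
  rw [LinearMap.mem_ker]
  revert v
  decide

theorem fixedSpace_s3 :
    fixedSpace s3 = LinearMap.ker ((LinearMap.proj 0 : (Fin 4 → ZMod 2) →ₗ[ZMod 2] ZMod 2) +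
      (LinearMap.proj 1 : (Fin 4 → ZMod 2) →ₗ[ZMod 2] ZMod 2)) := by
  ext v
  rw [LinearMap.mem_ker]
  revert v
  decide

/-- For `G = ⟨σ₁, σ₂, σ₃⟩ ≅ (ℤ/2ℤ)³` acting on `V = F₂⁴` as above:
`σ₁`, `σ₂`, `σ₃` are the only transvections in `G`; their transvection hyperplanes are
defined by the linear forms `x₁`, `x₂` and `x₁ + x₂` respectively; and the Dedekind
different (the product of the linear forms defining the reflecting hyperplanes, each with
multiplicity one) is `θ = x₁·x₂·(x₁ + x₂)`. -/
theorem statement18 (G : Subgroup (Matrix.GeneralLinearGroup (Fin 4) (ZMod 2)))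
    (hG : G = Subgroup.closure {s1, s2, s3}) :
    (∀ σ ∈ G, IsTransvection σ ↔ σ = s1 ∨ σ = s2 ∨ σ = s3) ∧
    fixedSpace s1 =
      LinearMap.ker (LinearMap.proj 0 : (Fin 4 → ZMod 2) →ₗ[ZMod 2] ZMod 2) ∧
    fixedSpace s2 =
      LinearMap.ker (LinearMap.proj 1 : (Fin 4 → ZMod 2) →ₗ[ZMod 2] ZMod 2) ∧
    fixedSpace s3 =
      LinearMap.ker ((LinearMap.proj 0 : (Fin 4 → ZMod 2) →ₗ[ZMod 2] ZMod 2) +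
        (LinearMap.proj 1 : (Fin 4 → ZMod 2) →ₗ[ZMod 2] ZMod 2)) ∧
    ∀ x₁ x₂ x₃ : Module.Dual (ZMod 2) (Fin 4 → ZMod 2),
      LinearMap.ker x₁ = fixedSpace s1 → LinearMap.ker x₂ = fixedSpace s2 →
      LinearMap.ker x₃ = fixedSpace s3 →
      linForm x₁ * linForm x₂ * linForm x₃ =
        X 0 * X 1 * (X 0 + X 1) := by
  subst hG
  refine ⟨fun σ hσ => isTransvection_iff_of_mem_sigmaSubgroup (closure_le_sigmaSubgroup hσ),
    fixedSpace_s1, fixedSpace_s2, fixedSpace_s3, fun x₁ x₂ x₃ h₁ h₂ h₃ => ?_⟩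
  rw [fixedSpace_s1] at h₁
  rw [fixedSpace_s2] at h₂
  rw [fixedSpace_s3] at h₃
  obtain rfl := Module.Dual.eq_of_ker_eq_of_zmod_two h₁
  obtain rfl := Module.Dual.eq_of_ker_eq_of_zmod_two h₂
  obtain rfl := Module.Dual.eq_of_ker_eq_of_zmod_two h₃
  rw [linForm_add, linForm_proj, linForm_proj]
end
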